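/- There exists an absolute constant C > 0 such that for every function u : [0,1] → ℝ of bounded pointwise variation V(u) := sup Σ_j |u(ξ_{j+1}) − u(ξ_j)| (supremum over all partitions 0 ≤ ξ₀ < ... < ξ_n ≤ 1) and every positive integer N, the Bernstein polynomial B_N(u)(x) := Σ_{k=0}^{N} u(k/N) · binom(N,k) · x^k (1−x)^{N−k} satisfies ∫_0^1 |B_N(u)(x) − u(x)| dx ≤ C · V(u) · N^{−1/2}. -/

import Mathlib

open MeasureTheory intervalIntegral

/-- The `N`-th Bernstein polynomial of `u` on `[0,1]`:
`B_N(u)(x) = Σ_{k=0}^{N} u(k/N)·binom(N,k)·x^k(1−x)^{N−k}`. -/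
noncomputable def bernstein' (N : ℕ) (u : ℝ → ℝ) (x : ℝ) : ℝ :=
  ∑ k ∈ Finset.range (N + 1),
    u ((k : ℝ) / (N : ℝ)) * (N.choose k : ℝ) * x ^ k * (1 - x) ^ (N - k)

/-!
The Stieltjes measure `μ` of the variation function of `u` has total mass `V(u)` and satisfies
`|u y - u x| ≤ μ [x, y]`. Hence `|B_N u x - u x| ≤ ∑ₖ p_{N,k}(x) μ [x, k/N] = ∫ K_N(x, t) dμ(t)`,
where `K_N(x, t)` is the `p_{N,·}(x)`-mass of the nodes `k/N` that lie beyond `t` as seen from `x`.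
By Fubini it suffices to bound `∫₀¹ K_N(x, t) dx` uniformly in `t`. Now `K_N ≤ 1` and, by
Chebyshev's inequality for the binomial variance `x(1-x)/N ≤ 1/(4N)`,
`K_N(x, t) (x - t)² ≤ 1/(4N)`; so `K_N(·, t)` is dominated by `2πγ` times the Cauchy density of
centre `t` and scale `γ = 1/(2√N)`, and `∫ K_N(x, t) dx ≤ π/√N`.
-/

open Set Finset Function ProbabilityTheory Real
open scoped NNReal

lemma Monotone.ofReal_sub_le_stieltjesFunction_measure_Icc {v : ℝ → ℝ} (hv : Monotone v)
    (a b : ℝ) : ENNReal.ofReal (v b - v a) ≤ hv.stieltjesFunction.measure (Icc a b) := by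
  rw [StieltjesFunction.measure_Icc]
  change _ ≤ ENNReal.ofReal (rightLim v b - leftLim (rightLim v) a)
  rw [leftLim_rightLim (hv.tendsto_leftLim a)]
  exact ENNReal.ofReal_le_ofReal
    (by linarith [hv.le_rightLim (le_refl b), hv.leftLim_le (le_refl a)])

lemma Monotone.stieltjesFunction_measure_Icc_le {v : ℝ → ℝ} (hv : Monotone v)
    {a b a' b' : ℝ} (ha : a' < a) (hb : b < b') :
    hv.stieltjesFunction.measure (Icc a b) ≤ ENNReal.ofReal (v b' - v a') := by
  rw [StieltjesFunction.measure_Icc]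
  change ENNReal.ofReal (rightLim v b - leftLim (rightLim v) a) ≤ _
  rw [leftLim_rightLim (hv.tendsto_leftLim a)]
  exact ENNReal.ofReal_le_ofReal (by linarith [hv.rightLim_le hb, hv.le_leftLim ha])

theorem BoundedVariationOn.exists_measure_abs_sub_le_measure_uIcc {u : ℝ → ℝ} {a b : ℝ}
    (hab : a ≤ b) (hu : BoundedVariationOn u (Icc a b)) :
    ∃ μ : Measure ℝ, μ univ ≤ eVariationOn u (Icc a b) ∧
      ∀ x ∈ Icc a b, ∀ y ∈ Icc a b, ENNReal.ofReal |u y - u x| ≤ μ (uIcc x y) := by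
  -- the variation function `x ↦ V(u, [a, x])`, extended by constants outside `[a, b]`
  set v : ℝ → ℝ := fun x ↦ variationOnFromTo u (Icc a b) a (projIcc a b hab x)
  have hv : Monotone v := fun x y hxy ↦
    variationOnFromTo.monotoneOn hu.locallyBoundedVariationOn (left_mem_Icc.2 hab)
      (projIcc a b hab x).2 (projIcc a b hab y).2 (monotone_projIcc hab hxy)
  have hv_of_mem : ∀ x ∈ Icc a b, v x = variationOnFromTo u (Icc a b) a x := fun x hx ↦ by
    simp only [v, projIcc_of_mem hab hx]
  refine ⟨hv.stieltjesFunction.measure.restrict (Icc a b), ?_, fun x hx y hy ↦ ?_⟩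
  · rw [Measure.restrict_apply_univ]
    calc hv.stieltjesFunction.measure (Icc a b) ≤ ENNReal.ofReal (v (b + 1) - v (a - 1)) :=
          hv.stieltjesFunction_measure_Icc_le (by linarith) (by linarith)
      _ = eVariationOn u (Icc a b) := by
          simp only [v, projIcc_of_right_le hab (by linarith : b ≤ b + 1),
            projIcc_of_le_left hab (by linarith : a - 1 ≤ a), variationOnFromTo.self,
            variationOnFromTo.eq_of_le _ _ hab, inter_self, sub_zero, ENNReal.ofReal_toReal hu]
  · rw [Measure.restrict_eq_self _ (uIcc_subset_Icc hx hy)]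
    wlog hxy : x ≤ y generalizing x y
    · rw [abs_sub_comm, Set.uIcc_comm]
      exact this y hy x hx (le_of_not_ge hxy)
    rw [uIcc_of_le hxy]
    refine (ENNReal.ofReal_le_ofReal ?_).trans (hv.ofReal_sub_le_stieltjesFunction_measure_Icc x y)
    rw [hv_of_mem x hx, hv_of_mem y hy]
    exact variationOnFromTo.abs_sub_le_sub_of_le hu.locallyBoundedVariationOn
      (left_mem_Icc.2 hab) hx hy hxy

lemma abs_sum_mul_sub_le {ι : Type*} (s : Finset ι) {w a : ι → ℝ} (hw : ∀ i ∈ s, 0 ≤ w i)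
    (hw_sum : ∑ i ∈ s, w i = 1) (b : ℝ) :
    |∑ i ∈ s, w i * a i - b| ≤ ∑ i ∈ s, w i * |a i - b| := by
  have : ∑ i ∈ s, w i * a i - b = ∑ i ∈ s, w i * (a i - b) := by
    simp only [mul_sub, sum_sub_distrib, ← sum_mul, hw_sum, one_mul]
  rw [this]
  refine (abs_sum_le_sum_abs _ _).trans_eq (sum_congr rfl fun i hi ↦ ?_)
  rw [abs_mul, abs_of_nonneg (hw i hi)]

namespace bernsteinPolynomial

lemma eval_nonneg {N k : ℕ} {x : ℝ} (hx : x ∈ Icc (0 : ℝ) 1) :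
    0 ≤ (bernsteinPolynomial ℝ N k).eval x :=
  bernstein_nonneg (x := ⟨x, hx⟩)

lemma sum_eval (N : ℕ) (x : ℝ) :
    ∑ k ∈ range (N + 1), (bernsteinPolynomial ℝ N k).eval x = 1 := by
  simpa [Polynomial.eval_finsetSum] using
    congr_arg (Polynomial.eval x) (bernsteinPolynomial.sum ℝ N)

lemma sum_sq_mul_eval {N : ℕ} (hN : N ≠ 0) {x : ℝ} (hx : x ∈ Icc (0 : ℝ) 1) :
    ∑ k ∈ range (N + 1), (x - k / N) ^ 2 * (bernsteinPolynomial ℝ N k).eval x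
      = x * (1 - x) / N := by
  rw [← Fin.sum_univ_eq_sum_range fun k ↦ (x - k / N) ^ 2 * (bernsteinPolynomial ℝ N k).eval x]
  exact bernstein.variance hN ⟨x, hx⟩

end bernsteinPolynomial

lemma bernstein'_eq_sum (N : ℕ) (u : ℝ → ℝ) (x : ℝ) :
    bernstein' N u x = ∑ k ∈ range (N + 1), (bernsteinPolynomial ℝ N k).eval x * u (k / N) := by
  simp only [bernstein', bernsteinPolynomial, Polynomial.eval_mul, Polynomial.eval_pow,
    Polynomial.eval_sub, Polynomial.eval_X, Polynomial.eval_one, Polynomial.eval_natCast]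
  exact sum_congr rfl fun k _ ↦ by ring

lemma natCast_div_mem_Icc {N k : ℕ} (hk : k ∈ range (N + 1)) : (k / N : ℝ) ∈ Icc (0 : ℝ) 1 :=
  ⟨by positivity, div_le_one_of_le₀ (by exact_mod_cast Nat.lt_succ_iff.1 (mem_range.1 hk))
    N.cast_nonneg⟩

lemma le_two_mul_pi_mul_cauchyPDFReal {a x t : ℝ} {γ : ℝ≥0} (hγ : γ ≠ 0) (h_one : a ≤ 1)
    (h_sq : a * (x - t) ^ 2 ≤ γ ^ 2) : a ≤ 2 * π * γ * cauchyPDFReal t γ x := by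
  rw [cauchyPDFReal_def, show 2 * π * γ * (π⁻¹ * γ * ((x - t) ^ 2 + γ ^ 2)⁻¹)
      = 2 * γ ^ 2 / ((x - t) ^ 2 + γ ^ 2) by field_simp, le_div_iff₀ (by positivity)]
  nlinarith

noncomputable def bernsteinKernel (N : ℕ) (x t : ℝ) : ℝ :=
  ∑ k ∈ range (N + 1), (bernsteinPolynomial ℝ N k).eval x * (uIcc x (k / N)).indicator 1 t

lemma bernsteinKernel_le_one (N : ℕ) {x : ℝ} (hx : x ∈ Icc (0 : ℝ) 1) (t : ℝ) :
    bernsteinKernel N x t ≤ 1 :=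
  calc bernsteinKernel N x t ≤ ∑ k ∈ range (N + 1), (bernsteinPolynomial ℝ N k).eval x :=
        sum_le_sum fun _ _ ↦ mul_le_of_le_one_right (bernsteinPolynomial.eval_nonneg hx)
          (by unfold indicator; split_ifs <;> simp)
    _ = 1 := bernsteinPolynomial.sum_eval N x

lemma bernsteinKernel_mul_sq_le {N : ℕ} (hN : N ≠ 0) {x : ℝ} (hx : x ∈ Icc (0 : ℝ) 1) (t : ℝ) :
    bernsteinKernel N x t * (x - t) ^ 2 ≤ 1 / (4 * N) := by
  calc bernsteinKernel N x t * (x - t) ^ 2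
      = ∑ k ∈ range (N + 1),
          (bernsteinPolynomial ℝ N k).eval x * ((uIcc x (k / N)).indicator 1 t * (x - t) ^ 2) := by
        simp only [bernsteinKernel, sum_mul, mul_assoc]
    _ ≤ ∑ k ∈ range (N + 1), (x - k / N) ^ 2 * (bernsteinPolynomial ℝ N k).eval x := by
        refine sum_le_sum fun k _ ↦ ?_
        rw [mul_comm _ (Polynomial.eval _ _)]
        refine mul_le_mul_of_nonneg_left ?_ (bernsteinPolynomial.eval_nonneg hx)
        by_cases ht : t ∈ uIcc x (k / N)
        · rw [indicator_of_mem ht, Pi.one_apply, one_mul, sq_le_sq, abs_sub_comm x t,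
            abs_sub_comm x]
          exact abs_sub_left_of_mem_uIcc ht
        · simpa [indicator_of_notMem ht] using sq_nonneg _
    _ = x * (1 - x) / N := bernsteinPolynomial.sum_sq_mul_eval hN hx
    _ ≤ 1 / (4 * N) := by
        rw [div_le_div_iff₀ (by positivity) (by positivity)]
        nlinarith [sq_nonneg (2 * x - 1)]

lemma measurable_bernsteinKernel (N : ℕ) : Measurable (uncurry (bernsteinKernel N)) := by
  simp only [uncurry_def, bernsteinKernel]
  refine Finset.measurable_sum _ fun k _ ↦ ?_
  have hS : MeasurableSet {p : ℝ × ℝ | p.2 ∈ uIcc p.1 (k / N)} :=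
    (measurableSet_le (measurable_fst.min measurable_const) measurable_snd).inter
      (measurableSet_le measurable_snd (measurable_fst.max measurable_const))
  exact ((Polynomial.continuous _).measurable.comp measurable_fst).mul
    (measurable_const.indicator hS)

lemma lintegral_bernsteinKernel_le {N : ℕ} (hN : N ≠ 0) (t : ℝ) :
    ∫⁻ x in Ioc 0 1, ENNReal.ofReal (bernsteinKernel N x t)
      ≤ ENNReal.ofReal (π * (N : ℝ) ^ (-(1 / 2 : ℝ))) := by
  have hN_pos : (0 : ℝ) < N := by positivity
  set γ : ℝ≥0 := ⟨(2 * √N)⁻¹, by positivity⟩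
  have hγ_def : (γ : ℝ) = (2 * √N)⁻¹ := rfl
  have hγ : γ ≠ 0 := by
    rw [← NNReal.coe_ne_zero, hγ_def]
    positivity
  have hγ_sq : (γ : ℝ) ^ 2 = 1 / (4 * N) := by
    rw [hγ_def, inv_pow, mul_pow, sq_sqrt hN_pos.le]
    norm_num
  calc ∫⁻ x in Ioc 0 1, ENNReal.ofReal (bernsteinKernel N x t)
      ≤ ∫⁻ x in Ioc 0 1, ENNReal.ofReal (2 * π * γ) * cauchyPDF t γ x := by
        refine setLIntegral_mono (by fun_prop) fun x hx ↦ ?_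
        have hx' : x ∈ Icc (0 : ℝ) 1 := Ioc_subset_Icc_self hx
        rw [cauchyPDF, ← ENNReal.ofReal_mul (by positivity)]
        refine ENNReal.ofReal_le_ofReal (le_two_mul_pi_mul_cauchyPDFReal hγ
          (bernsteinKernel_le_one N hx' t) ?_)
        rw [hγ_sq]
        exact bernsteinKernel_mul_sq_le hN hx' t
    _ ≤ ∫⁻ x, ENNReal.ofReal (2 * π * γ) * cauchyPDF t γ x := setLIntegral_le_lintegral _ _
    _ = ENNReal.ofReal (π * (N : ℝ) ^ (-(1 / 2 : ℝ))) := by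
        rw [lintegral_const_mul _ (measurable_cauchyPDF _ _), lintegral_cauchyPDF_eq_one _ hγ,
          mul_one, rpow_neg hN_pos.le, ← Real.sqrt_eq_rpow, hγ_def]
        congr 1
        field_simp

lemma ofReal_abs_bernstein'_sub_le_lintegral {u : ℝ → ℝ} {μ : Measure ℝ}
    (hμ : ∀ x ∈ Icc (0 : ℝ) 1, ∀ y ∈ Icc (0 : ℝ) 1, ENNReal.ofReal |u y - u x| ≤ μ (uIcc x y))
    (N : ℕ) {x : ℝ} (hx : x ∈ Icc (0 : ℝ) 1) :
    ENNReal.ofReal |bernstein' N u x - u x| ≤ ∫⁻ t, ENNReal.ofReal (bernsteinKernel N x t) ∂μ := by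
  have hp : ∀ k, 0 ≤ (bernsteinPolynomial ℝ N k).eval x := fun _ ↦
    bernsteinPolynomial.eval_nonneg hx
  calc ENNReal.ofReal |bernstein' N u x - u x|
      ≤ ENNReal.ofReal
          (∑ k ∈ range (N + 1), (bernsteinPolynomial ℝ N k).eval x * |u (k / N) - u x|) := by
        rw [bernstein'_eq_sum]
        exact ENNReal.ofReal_le_ofReal
          (abs_sum_mul_sub_le _ (fun k _ ↦ hp k) (bernsteinPolynomial.sum_eval N x) _)
    _ = ∑ k ∈ range (N + 1), ENNReal.ofReal ((bernsteinPolynomial ℝ N k).eval x) *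
          ENNReal.ofReal |u (k / N) - u x| := by
        rw [ENNReal.ofReal_sum_of_nonneg fun k _ ↦ mul_nonneg (hp k) (abs_nonneg _)]
        exact sum_congr rfl fun k _ ↦ ENNReal.ofReal_mul (hp k)
    _ ≤ ∑ k ∈ range (N + 1),
          ENNReal.ofReal ((bernsteinPolynomial ℝ N k).eval x) * μ (uIcc x (k / N)) := by
        gcongr with k hk
        exact hμ x hx _ (natCast_div_mem_Icc hk)
    _ = ∫⁻ t, ∑ k ∈ range (N + 1), ENNReal.ofReal ((bernsteinPolynomial ℝ N k).eval x) *
          (uIcc x (k / N)).indicator 1 t ∂μ := by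
        rw [lintegral_finsetSum _ fun k _ ↦
          (measurable_one.indicator measurableSet_uIcc).const_mul _]
        refine sum_congr rfl fun k _ ↦ ?_
        rw [lintegral_const_mul _ (measurable_one.indicator measurableSet_uIcc),
          lintegral_indicator_one measurableSet_uIcc]
    _ = ∫⁻ t, ENNReal.ofReal (bernsteinKernel N x t) ∂μ := by
        refine lintegral_congr fun t ↦ ?_
        rw [bernsteinKernel, ENNReal.ofReal_sum_of_nonneg fun k _ ↦
          mul_nonneg (hp k) (indicator_nonneg (f := (1 : ℝ → ℝ)) (fun _ _ ↦ zero_le_one) t)]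
        refine sum_congr rfl fun k _ ↦ ?_
        rw [ENNReal.ofReal_mul (hp k)]
        by_cases ht : t ∈ uIcc x (k / N) <;> simp [ht]

lemma lintegral_abs_bernstein'_sub_le {u : ℝ → ℝ} (hu : BoundedVariationOn u (Icc 0 1)) {N : ℕ}
    (hN : N ≠ 0) :
    ∫⁻ x in Ioc 0 1, ENNReal.ofReal |bernstein' N u x - u x|
      ≤ ENNReal.ofReal (π * (N : ℝ) ^ (-(1 / 2 : ℝ))) * eVariationOn u (Icc 0 1) := by
  obtain ⟨μ, hμ_univ, hμ⟩ := hu.exists_measure_abs_sub_le_measure_uIcc zero_le_one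
  have : IsFiniteMeasure μ := ⟨hμ_univ.trans_lt hu.lt_top⟩
  calc ∫⁻ x in Ioc 0 1, ENNReal.ofReal |bernstein' N u x - u x|
      ≤ ∫⁻ x in Ioc 0 1, ∫⁻ t, ENNReal.ofReal (bernsteinKernel N x t) ∂μ :=
        setLIntegral_mono' measurableSet_Ioc fun x hx ↦
          ofReal_abs_bernstein'_sub_le_lintegral hμ N (Ioc_subset_Icc_self hx)
    _ = ∫⁻ t, (∫⁻ x in Ioc 0 1, ENNReal.ofReal (bernsteinKernel N x t)) ∂μ :=
        lintegral_lintegral_swap (measurable_bernsteinKernel N).ennreal_ofReal.aemeasurable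
    _ ≤ ∫⁻ _, ENNReal.ofReal (π * (N : ℝ) ^ (-(1 / 2 : ℝ))) ∂μ :=
        lintegral_mono fun t ↦ lintegral_bernsteinKernel_le hN t
    _ ≤ ENNReal.ofReal (π * (N : ℝ) ^ (-(1 / 2 : ℝ))) * eVariationOn u (Icc 0 1) := by
        rw [lintegral_const]
        gcongr

theorem bernstein_L1_error_BV :
    ∃ C : ℝ, 0 < C ∧
      ∀ u : ℝ → ℝ, eVariationOn u (Set.Icc (0 : ℝ) 1) ≠ ⊤ →
        ∀ N : ℕ, 0 < N →
          ∫ x in (0 : ℝ)..1, |bernstein' N u x - u x|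
            ≤ C * (eVariationOn u (Set.Icc (0 : ℝ) 1)).toReal * (N : ℝ) ^ (-(1 / 2 : ℝ)) := by
  refine ⟨π, pi_pos, fun u hu N hN ↦ ?_⟩
  calc ∫ x in (0 : ℝ)..1, |bernstein' N u x - u x|
      ≤ (∫⁻ x in Ioc 0 1, ENNReal.ofReal |bernstein' N u x - u x|).toReal := by
        rw [intervalIntegral.integral_of_le zero_le_one]
        refine (le_abs_self _).trans ?_
        simpa using norm_integral_le_lintegral_norm (μ := volume.restrict (Ioc (0 : ℝ) 1))
          fun x ↦ |bernstein' N u x - u x|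
    _ ≤ (ENNReal.ofReal (π * (N : ℝ) ^ (-(1 / 2 : ℝ))) * eVariationOn u (Icc 0 1)).toReal :=
        ENNReal.toReal_mono (ENNReal.mul_ne_top ENNReal.ofReal_ne_top hu)
          (lintegral_abs_bernstein'_sub_le hu hN.ne')
    _ = π * (eVariationOn u (Icc 0 1)).toReal * (N : ℝ) ^ (-(1 / 2 : ℝ)) := by
        rw [ENNReal.toReal_mul, ENNReal.toReal_ofReal (by positivity)]
        ring
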